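/- arXiv:math/0009102 — 5 statements merged into one kernel-verified Lean document; each statement's English description precedes it below -/
import Mathlib

section
/- (Mateev) For every n ∈ ℕ and every q ∈ [0,1], the Shannon entropy of the binomial distribution B(n,q) satisfies H_n(q) ≤ H_n(1/2); i.e., the entropy of B(n,q) is maximized at q = 1/2. -/
/-!
By the symmetry `H_n(1 - q) = H_n(q)` it suffices to show that `H_n` is nondecreasing on
`[0, 1/2]`. Write `b_{n,k}` for the Bernstein polynomials, so that `b_{n,k}(q)` are the binomial
weights. Summation by parts gives `∑ₖ xₖ b'_{n,k} = n ∑ⱼ (x_{j+1} - xⱼ) b_{n-1,j}`. Applied to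
`xₖ = -log b_{n,k}(q) - 1`, together with `b_{n,j+1} / b_{n,j} = (n - j) q / ((j + 1) (1 - q))`,
it shows that the derivative of `H_n · log 2` is `n (F(q) - F(1 - q))`, where
`F(t) = 𝔼[log (X + 1)] - log t` for `X ∼ B(n - 1, t)`. Finally `F` is decreasing:
`log (j + 2) - log (j + 1) ≤ 1 / (j + 1)` and `m t 𝔼[1 / (X + 1)] ≤ 1` for `X ∼ B(m - 1, t)`
give `F'(t) ≤ 0`.
-/

open Finset

/-- `H_n(q)`: Shannon entropy (base 2) of the binomial distribution `B(n,q)`,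
with the convention `0 · log₂ 0 = 0` (note `Real.logb 2 0 = 0`). -/
noncomputable def binomEnt (n : ℕ) (q : ℝ) : ℝ :=
  -∑ k ∈ Finset.range (n + 1),
    ((n.choose k : ℝ) * q ^ k * (1 - q) ^ (n - k)) *
      Real.logb 2 ((n.choose k : ℝ) * q ^ k * (1 - q) ^ (n - k))

open Polynomial Real

section BernsteinSum

variable {R : Type*} [CommRing R]

variable (R) in
/-- Evaluated at `t ∈ [0, 1]`, this is `𝔼[x X]` for `X ∼ B(n, t)`. -/
noncomputable def bernsteinSum (n : ℕ) (x : ℕ → R) : R[X] :=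
  ∑ k ∈ range (n + 1), x k • bernsteinPolynomial R n k

theorem eval_bernsteinSum (n : ℕ) (x : ℕ → R) (t : R) :
    (bernsteinSum R n x).eval t =
      ∑ k ∈ range (n + 1), x k * (bernsteinPolynomial R n k).eval t := by
  simp [bernsteinSum, eval_finsetSum]

theorem derivative_bernsteinSum (n : ℕ) (x : ℕ → R) :
    derivative (bernsteinSum R n x) = n * bernsteinSum R (n - 1) fun k => x (k + 1) - x k := by
  simp only [bernsteinSum, derivative_sum, derivative_smul]
  rw [sum_range_succ', bernsteinPolynomial.derivative_zero]
  simp only [bernsteinPolynomial.derivative_succ, smul_eq_C_mul]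
  cases n with
  | zero => simp
  | succ m =>
    have hshift : ∑ k ∈ range (m + 1), C (x k) * bernsteinPolynomial R m k =
        C (x 0) * bernsteinPolynomial R m 0 +
          ∑ k ∈ range (m + 1), C (x (k + 1)) * bernsteinPolynomial R m (k + 1) := by
      rw [sum_range_succ (fun k => C (x (k + 1)) * _),
        bernsteinPolynomial.eq_zero_of_lt R m.lt_succ_self, mul_zero, add_zero, sum_range_succ',
        add_comm]
    simp only [Nat.add_sub_cancel, mul_left_comm (C _) ((m + 1 : ℕ) : R[X]), ← mul_sum, C_sub,
      sub_mul, mul_sub, sum_sub_distrib, hshift]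
    ring

theorem bernsteinSum_comp_one_sub (n : ℕ) (x : ℕ → R) :
    (bernsteinSum R n x).comp (1 - X) = bernsteinSum R n fun k => x (n - k) := by
  simp only [bernsteinSum, Polynomial.sum_comp, smul_comp]
  rw [← sum_range_reflect _ (n + 1)]
  refine sum_congr rfl fun k hk => ?_
  have hk : k ≤ n := Nat.lt_succ_iff.mp (mem_range.mp hk)
  rw [bernsteinPolynomial.flip _ _ _ (by omega), Nat.add_sub_cancel, Nat.sub_sub_self hk]

theorem bernsteinPolynomial.succ_mul_succ (n ν : ℕ) :
    ((ν + 1 : ℕ) : R[X]) * bernsteinPolynomial R n (ν + 1) =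
      (n : R[X]) * X * bernsteinPolynomial R (n - 1) ν := by
  cases n with
  | zero => simp [bernsteinPolynomial]
  | succ m =>
    have h := congrArg (fun k : ℕ => (k : R[X])) (Nat.add_one_mul_choose_eq m ν)
    simp only [bernsteinPolynomial, Nat.add_sub_cancel, Nat.add_sub_add_right]
    push_cast at h ⊢
    linear_combination (X ^ (ν + 1) * (1 - X) ^ (m - ν) : R[X]) * h.symm

theorem bernsteinPolynomial.succ_mul_one_sub_mul_succ {n ν : ℕ} (h : ν < n) :
    ((ν + 1 : ℕ) : R[X]) * (1 - X) * bernsteinPolynomial R n (ν + 1) =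
      ((n - ν : ℕ) : R[X]) * X * bernsteinPolynomial R n ν := by
  obtain ⟨m, rfl⟩ := Nat.exists_eq_add_of_lt h
  have hc := congrArg (fun k : ℕ => (k : R[X])) (Nat.choose_succ_right_eq (ν + m + 1) ν)
  have e1 : ν + m + 1 - (ν + 1) = m := by omega
  have e2 : ν + m + 1 - ν = m + 1 := by omega
  simp only [bernsteinPolynomial, e1, e2] at hc ⊢
  push_cast at hc ⊢
  linear_combination (X ^ (ν + 1) * (1 - X) ^ (m + 1) : R[X]) * hc

end BernsteinSum

section OrderedRing

variable {R : Type*} [CommRing R] [LinearOrder R] [IsStrictOrderedRing R]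

theorem eval_bernsteinPolynomial_nonneg (n ν : ℕ) {t : R} (h0 : 0 ≤ t) (h1 : t ≤ 1) :
    0 ≤ (bernsteinPolynomial R n ν).eval t := by
  have : 0 ≤ 1 - t := sub_nonneg.mpr h1
  simp only [bernsteinPolynomial, eval_mul, eval_pow, eval_sub, eval_one, eval_X, eval_natCast]
  positivity

theorem eval_bernsteinPolynomial_pos {n ν : ℕ} (h : ν ≤ n) {t : R} (h0 : 0 < t) (h1 : t < 1) :
    0 < (bernsteinPolynomial R n ν).eval t := by
  have : 0 < 1 - t := sub_pos.mpr h1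
  have : (0 : R) < n.choose ν := Nat.cast_pos.mpr (Nat.choose_pos h)
  simp only [bernsteinPolynomial, eval_mul, eval_pow, eval_sub, eval_one, eval_X, eval_natCast]
  positivity

theorem eval_bernsteinSum_le_eval_bernsteinSum {n : ℕ} {x y : ℕ → R}
    (hxy : ∀ k ≤ n, x k ≤ y k) {t : R} (h0 : 0 ≤ t) (h1 : t ≤ 1) :
    (bernsteinSum R n x).eval t ≤ (bernsteinSum R n y).eval t := by
  simp only [eval_bernsteinSum]
  exact sum_le_sum fun k hk => mul_le_mul_of_nonneg_right
    (hxy k (Nat.lt_succ_iff.mp (mem_range.mp hk))) (eval_bernsteinPolynomial_nonneg n k h0 h1)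

end OrderedRing

theorem mul_mul_eval_bernsteinSum_inv_succ_le_one (m : ℕ) {t : ℝ} (h0 : 0 ≤ t) (h1 : t ≤ 1) :
    m * t * (bernsteinSum ℝ (m - 1) fun j => 1 / (j + 1)).eval t ≤ 1 := by
  cases m with
  | zero => simp
  | succ m =>
    have hterm (j : ℕ) : (m + 1 : ℕ) * t * (1 / (j + 1) * (bernsteinPolynomial ℝ m j).eval t) =
        (bernsteinPolynomial ℝ (m + 1) (j + 1)).eval t := by
      have h := congrArg (eval t) (bernsteinPolynomial.succ_mul_succ (R := ℝ) (m + 1) j)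
      simp only [eval_mul, eval_natCast, eval_X, Nat.add_sub_cancel] at h
      push_cast at h ⊢
      field_simp
      linear_combination h.symm
    calc (m + 1 : ℕ) * t * (bernsteinSum ℝ (m + 1 - 1) fun j => 1 / ((j : ℝ) + 1)).eval t
        = ∑ j ∈ range (m + 1), (bernsteinPolynomial ℝ (m + 1) (j + 1)).eval t := by
          simp only [Nat.add_sub_cancel, eval_bernsteinSum, mul_sum, hterm]
      _ ≤ ∑ k ∈ range (m + 2), (bernsteinPolynomial ℝ (m + 1) k).eval t := by
          rw [sum_range_succ' _ (m + 1)]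
          exact le_add_of_nonneg_right (eval_bernsteinPolynomial_nonneg _ _ h0 h1)
      _ = 1 := by
          rw [← eval_finsetSum, bernsteinPolynomial.sum, eval_one]

theorem log_eval_bernsteinPolynomial_sub_log_eval_succ {n ν : ℕ} (h : ν < n) {t : ℝ}
    (h0 : 0 < t) (h1 : t < 1) :
    log ((bernsteinPolynomial ℝ n ν).eval t) - log ((bernsteinPolynomial ℝ n (ν + 1)).eval t) =
      log (ν + 1) - log (n - ν : ℕ) + (log (1 - t) - log t) := by
  have hb := eval_bernsteinPolynomial_pos h.le h0 h1
  have hb' := eval_bernsteinPolynomial_pos (Nat.succ_le_of_lt h) h0 h1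
  have hnν : (0 : ℝ) < (n - ν : ℕ) := Nat.cast_pos.mpr (Nat.sub_pos_of_lt h)
  have hlog := congrArg (fun p => log (eval t p))
    (bernsteinPolynomial.succ_mul_one_sub_mul_succ (R := ℝ) h)
  simp only [eval_mul, eval_natCast, eval_sub, eval_one, eval_X] at hlog
  push_cast [Nat.succ_eq_add_one] at hlog
  rw [log_mul (by positivity) hb'.ne', log_mul (by positivity) (by linarith),
    log_mul (by positivity) hb.ne', log_mul hnν.ne' h0.ne'] at hlog
  linarith

noncomputable def logSuccMeanSubLog (m : ℕ) (t : ℝ) : ℝ :=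
  (bernsteinSum ℝ m fun j => log (j + 1)).eval t - log t

theorem antitoneOn_logSuccMeanSubLog (m : ℕ) : AntitoneOn (logSuccMeanSubLog m) (Set.Ioo 0 1) := by
  set P := bernsteinSum ℝ m fun j => log (j + 1)
  have hderiv (t : ℝ) (ht : t ∈ Set.Ioo (0 : ℝ) 1) :
      HasDerivAt (logSuccMeanSubLog m) ((derivative P).eval t - t⁻¹) t :=
    (P.hasDerivAt t).sub (hasDerivAt_log ht.1.ne')
  refine antitoneOn_of_hasDerivWithinAt_nonpos (f' := fun t => (derivative P).eval t - t⁻¹)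
    (convex_Ioo 0 1)
    (fun t ht => (hderiv t ht).continuousAt.continuousWithinAt) (fun t ht => ?_) (fun t ht => ?_)
  · rw [interior_Ioo] at ht
    exact (hderiv t ht).hasDerivWithinAt
  rw [interior_Ioo] at ht
  obtain ⟨h0, h1⟩ := ht
  have hlog_succ (j : ℕ) : log ((j + 1 : ℕ) + 1) - log ((j : ℝ) + 1) ≤ 1 / (j + 1) := by
    have hj : (0 : ℝ) < j + 1 := by positivity
    rw [← log_div (by positivity) hj.ne']
    calc log (((j + 1 : ℕ) + 1) / (j + 1)) ≤ ((j + 1 : ℕ) + 1) / (j + 1) - 1 :=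
          log_le_sub_one_of_pos (by positivity)
      _ = 1 / (j + 1) := by field_simp; push_cast; ring
  have hmean := eval_bernsteinSum_le_eval_bernsteinSum (n := m - 1) (fun j _ => hlog_succ j)
    h0.le h1.le
  have hbound := mul_mul_eval_bernsteinSum_inv_succ_le_one m h0.le h1.le
  rw [derivative_bernsteinSum, eval_mul, eval_natCast, sub_nonpos, ← one_div,
    le_div_iff₀ h0]
  linarith [mul_le_mul_of_nonneg_left hmean (by positivity : (0 : ℝ) ≤ m * t)]

noncomputable def binomEntropy (n : ℕ) (q : ℝ) : ℝ :=
  ∑ k ∈ range (n + 1), negMulLog ((bernsteinPolynomial ℝ n k).eval q)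

theorem binomEnt_eq_binomEntropy_div_log_two (n : ℕ) (q : ℝ) :
    binomEnt n q = binomEntropy n q / log 2 := by
  simp only [binomEnt, binomEntropy, negMulLog, logb, sum_div, ← sum_neg_distrib]
  refine sum_congr rfl fun k _ => ?_
  simp only [bernsteinPolynomial, eval_mul, eval_pow, eval_sub, eval_one, eval_X, eval_natCast]
  ring

theorem binomEntropy_one_sub (n : ℕ) (q : ℝ) : binomEntropy n (1 - q) = binomEntropy n q := by
  rw [binomEntropy, ← sum_range_reflect _ (n + 1)]
  refine sum_congr rfl fun k hk => ?_
  have hk : k ≤ n := Nat.lt_succ_iff.mp (mem_range.mp hk)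
  rw [Nat.add_sub_cancel, ← bernsteinPolynomial.flip _ _ _ hk, eval_comp]
  simp

theorem eval_bernsteinSum_log_sub_log_succ (m : ℕ) {q : ℝ} (h0 : 0 < q) (h1 : q < 1) :
    (bernsteinSum ℝ m fun j => log ((bernsteinPolynomial ℝ (m + 1) j).eval q) -
        log ((bernsteinPolynomial ℝ (m + 1) (j + 1)).eval q)).eval q =
      logSuccMeanSubLog m q - logSuccMeanSubLog m (1 - q) := by
  have hsum : ∑ j ∈ range (m + 1), (bernsteinPolynomial ℝ m j).eval q = 1 := by
    rw [← eval_finsetSum, bernsteinPolynomial.sum, eval_one]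
  have hreflect := congrArg (eval q) (bernsteinSum_comp_one_sub m fun j => log ((j : ℝ) + 1))
  simp only [eval_comp, eval_sub, eval_one, eval_X] at hreflect
  have hterm (j : ℕ) (hj : j ∈ range (m + 1)) :
      (log ((bernsteinPolynomial ℝ (m + 1) j).eval q) -
          log ((bernsteinPolynomial ℝ (m + 1) (j + 1)).eval q)) *
          (bernsteinPolynomial ℝ m j).eval q =
        log (j + 1) * (bernsteinPolynomial ℝ m j).eval q
          - log ((m - j : ℕ) + 1) * (bernsteinPolynomial ℝ m j).eval q
          + (log (1 - q) - log q) * (bernsteinPolynomial ℝ m j).eval q := by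
    have hj : j ≤ m := Nat.lt_succ_iff.mp (mem_range.mp hj)
    have hlog := log_eval_bernsteinPolynomial_sub_log_eval_succ (Nat.lt_succ_of_le hj) h0 h1
    rw [Nat.succ_sub hj] at hlog
    push_cast at hlog
    rw [hlog]
    ring
  rw [logSuccMeanSubLog, logSuccMeanSubLog, hreflect]
  simp only [eval_bernsteinSum]
  rw [sum_congr rfl hterm, sum_add_distrib, sum_sub_distrib, ← mul_sum, hsum]
  ring

theorem hasDerivAt_binomEntropy (n : ℕ) {q : ℝ} (h0 : 0 < q) (h1 : q < 1) :
    HasDerivAt (binomEntropy n)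
      (n * (logSuccMeanSubLog (n - 1) q - logSuccMeanSubLog (n - 1) (1 - q))) q := by
  have hterm (k : ℕ) (hk : k ∈ range (n + 1)) :
      HasDerivAt (fun t => negMulLog ((bernsteinPolynomial ℝ n k).eval t))
        ((-log ((bernsteinPolynomial ℝ n k).eval q) - 1) *
          (derivative (bernsteinPolynomial ℝ n k)).eval q) q := by
    have hb := eval_bernsteinPolynomial_pos (Nat.lt_succ_iff.mp (mem_range.mp hk)) h0 h1
    exact (hasDerivAt_negMulLog hb.ne').comp q ((bernsteinPolynomial ℝ n k).hasDerivAt q)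
  refine (HasDerivAt.fun_sum hterm).congr_deriv ?_
  set x := fun k => -log ((bernsteinPolynomial ℝ n k).eval q) - 1
  have hx : ∑ k ∈ range (n + 1), x k * (derivative (bernsteinPolynomial ℝ n k)).eval q =
      (derivative (bernsteinSum ℝ n x)).eval q := by
    simp [bernsteinSum, eval_finsetSum]
  rw [hx, derivative_bernsteinSum, eval_mul, eval_natCast]
  cases n with
  | zero => simp
  | succ m =>
    rw [Nat.add_sub_cancel, ← eval_bernsteinSum_log_sub_log_succ m h0 h1]
    congr 3
    funext k
    ring

theorem monotoneOn_binomEntropy (n : ℕ) : MonotoneOn (binomEntropy n) (Set.Icc 0 (1 / 2)) := by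
  have hcont : Continuous (binomEntropy n) := continuous_finsetSum _ fun k _ =>
    continuous_negMulLog.comp (bernsteinPolynomial ℝ n k).continuous
  refine monotoneOn_of_hasDerivWithinAt_nonneg (convex_Icc _ _) hcont.continuousOn
    (f' := fun q => n * (logSuccMeanSubLog (n - 1) q - logSuccMeanSubLog (n - 1) (1 - q)))
    (fun q hq => ?_) (fun q hq => ?_)
  all_goals
    rw [interior_Icc] at hq
    obtain ⟨h0, hhalf⟩ := hq
  · exact (hasDerivAt_binomEntropy n h0 (by linarith)).hasDerivWithinAt
  · have hF := antitoneOn_logSuccMeanSubLog (n - 1) ⟨h0, by linarith⟩ ⟨by linarith, by linarith⟩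
      (by linarith : q ≤ 1 - q)
    exact mul_nonneg (Nat.cast_nonneg n) (sub_nonneg.mpr hF)

/-- Mateev's theorem: the entropy of the binomial distribution `B(n,q)` is
maximized at `q = 1/2`. -/
theorem binomEnt_le_binomEnt_half (n : ℕ) (q : ℝ) (hq : q ∈ Set.Icc (0 : ℝ) 1) :
    binomEnt n q ≤ binomEnt n (1 / 2) := by
  simp only [binomEnt_eq_binomEntropy_div_log_two]
  gcongr
  obtain ⟨h0, h1⟩ := hq
  have hhalf : (1 / 2 : ℝ) ∈ Set.Icc 0 (1 / 2) := by norm_num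
  rcases le_total q (1 / 2) with hq | hq
  · exact monotoneOn_binomEntropy n ⟨h0, hq⟩ hhalf hq
  · rw [← binomEntropy_one_sub]
    exact monotoneOn_binomEntropy n ⟨by linarith, by linarith⟩ hhalf (by linarith)
end

section
/- (Strict log-concavity of the Poisson–binomial distribution) Let n ≥ 2 and p = (p_1,…,p_n) with 0 < p_i < 1 for all i. Then for every k with 1 ≤ k ≤ n−1, b(k−1,p)·b(k+1,p) < b(k,p)². -/
/-! Adding one more independent Bernoulli(`r`) summand turns the distribution `a`
into `c k = (1 - r) a k + r a (k - 1)`, and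
`c k ^ 2 - c (k-1) c (k+1) = (1-r)² (a k ² - a (k-1) a (k+1)) + r² (a (k-1) ² - a (k-2) a k)
  + r (1-r) (a (k-1) a k - a (k-2) a (k+1))`.
For a log-concave sequence without internal zeros all three brackets are nonnegative, and on the
support of `c` one of the first two is positive, so strict log-concavity on the support is
preserved; induct on the number of summands. -/

open Finset

/-- `b(k,p)`: the probability that the sum of independent Bernoulli(`p i`)
random variables equals `k` (Poisson–binomial distribution), defined for all
integers `k` (it vanishes for `k < 0` or `k > n`). -/
noncomputable def pbin (n : ℕ) (p : Fin n → ℝ) (k : ℤ) : ℝ :=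
  ∑ A ∈ Finset.univ.powerset.filter (fun A : Finset (Fin n) => (A.card : ℤ) = k),
    (∏ i ∈ A, p i) * ∏ j ∈ Aᶜ, (1 - p j)

structure IsStrictLogConcaveSeq (a : ℤ → ℝ) (m : ℕ) : Prop where
  pos : ∀ k : ℤ, 0 ≤ k → k ≤ m → 0 < a k
  eq_zero_of_neg : ∀ k : ℤ, k < 0 → a k = 0
  eq_zero_of_gt : ∀ k : ℤ, (m : ℤ) < k → a k = 0
  mul_lt_sq : ∀ k : ℤ, 0 ≤ k → k ≤ m → a (k - 1) * a (k + 1) < a k ^ 2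

namespace IsStrictLogConcaveSeq

variable {a : ℤ → ℝ} {m : ℕ}

lemma nonneg (ha : IsStrictLogConcaveSeq a m) (k : ℤ) : 0 ≤ a k := by
  rcases lt_or_ge k 0 with hk | hk
  · exact (ha.eq_zero_of_neg k hk).ge
  rcases le_or_gt k m with hkm | hkm
  · exact (ha.pos k hk hkm).le
  · exact (ha.eq_zero_of_gt k hkm).ge

lemma mul_le_sq (ha : IsStrictLogConcaveSeq a m) (k : ℤ) :
    a (k - 1) * a (k + 1) ≤ a k ^ 2 := by
  rcases lt_or_ge k 0 with hk | hk
  · rw [ha.eq_zero_of_neg (k - 1) (by omega), zero_mul]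
    positivity
  rcases le_or_gt k m with hkm | hkm
  · exact (ha.mul_lt_sq k hk hkm).le
  · rw [ha.eq_zero_of_gt (k + 1) (by omega), mul_zero]
    positivity

/-- The product of log-concavity at `k - 1` and at `k`, divided by `a (k-1) a k`: this is where
the absence of internal zeros is needed. -/
lemma outer_mul_le_inner_mul (ha : IsStrictLogConcaveSeq a m) (k : ℤ) :
    a (k - 2) * a (k + 1) ≤ a (k - 1) * a k := by
  have hprod := mul_nonneg (ha.nonneg (k - 1)) (ha.nonneg k)
  rcases lt_or_ge (k - 1) 0 with hk | hk
  · rw [ha.eq_zero_of_neg (k - 2) (by omega), zero_mul]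
    exact hprod
  rcases le_or_gt k m with hkm | hkm
  · have h₁ := ha.mul_le_sq (k - 1)
    have h₂ := ha.mul_le_sq k
    rw [show k - 1 - 1 = k - 2 by ring, sub_add_cancel] at h₁
    have hpos := mul_pos (ha.pos (k - 1) hk (by omega)) (ha.pos k (by omega) hkm)
    refine le_of_mul_le_mul_right ?_ hpos
    calc a (k - 2) * a (k + 1) * (a (k - 1) * a k)
        = (a (k - 2) * a k) * (a (k - 1) * a (k + 1)) := by ring
      _ ≤ a (k - 1) ^ 2 * a k ^ 2 :=
          mul_le_mul h₁ h₂ (mul_nonneg (ha.nonneg _) (ha.nonneg _)) (sq_nonneg _)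
      _ = a (k - 1) * a k * (a (k - 1) * a k) := by ring
  · rw [ha.eq_zero_of_gt (k + 1) (by omega), mul_zero]
    exact hprod

lemma convolve_bernoulli (ha : IsStrictLogConcaveSeq a m) {r : ℝ} (hr₀ : 0 < r) (hr₁ : r < 1)
    {c : ℤ → ℝ} (hc : ∀ k, c k = (1 - r) * a k + r * a (k - 1)) :
    IsStrictLogConcaveSeq c (m + 1) where
  pos k hk hkm := by
    rw [hc]
    rcases le_or_gt k m with hkm' | hkm'
    · exact add_pos_of_pos_of_nonneg (mul_pos (by linarith) (ha.pos k hk hkm'))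
        (mul_nonneg hr₀.le (ha.nonneg _))
    · exact add_pos_of_nonneg_of_pos (mul_nonneg (by linarith) (ha.nonneg _))
        (mul_pos hr₀ (ha.pos (k - 1) (by omega) (by push_cast at hkm; omega)))
  eq_zero_of_neg k hk := by
    rw [hc, ha.eq_zero_of_neg k hk, ha.eq_zero_of_neg (k - 1) (by omega)]
    ring
  eq_zero_of_gt k hk := by
    push_cast at hk
    rw [hc, ha.eq_zero_of_gt k (by omega), ha.eq_zero_of_gt (k - 1) (by omega)]
    ring
  mul_lt_sq k hk hkm := by
    have hprev : c (k - 1) = (1 - r) * a (k - 1) + r * a (k - 2) := by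
      rw [hc, show k - 1 - 1 = k - 2 by ring]
    have hnext : c (k + 1) = (1 - r) * a (k + 1) + r * a k := by
      rw [hc, add_sub_cancel_right]
    have hexpand : c k ^ 2 - c (k - 1) * c (k + 1) =
        (1 - r) ^ 2 * (a k ^ 2 - a (k - 1) * a (k + 1))
          + r ^ 2 * (a (k - 1) ^ 2 - a (k - 2) * a k)
          + r * (1 - r) * (a (k - 1) * a k - a (k - 2) * a (k + 1)) := by
      rw [hc k, hprev, hnext]
      ring
    have h₁ := sub_nonneg.2 (ha.mul_le_sq k)
    have h₂ := sub_nonneg.2 (ha.mul_le_sq (k - 1))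
    rw [show k - 1 - 1 = k - 2 by ring, sub_add_cancel] at h₂
    have h₃ := sub_nonneg.2 (ha.outer_mul_le_inner_mul k)
    have hq : 0 < 1 - r := by linarith
    rw [← sub_pos, hexpand]
    rcases le_or_gt k m with hkm' | hkm'
    · have := sub_pos.2 (ha.mul_lt_sq k hk hkm')
      linarith [mul_pos (pow_pos hq 2) this, mul_nonneg (sq_nonneg r) h₂,
        mul_nonneg (mul_nonneg hr₀.le hq.le) h₃]
    · have := sub_pos.2 (ha.mul_lt_sq (k - 1) (by omega) (by push_cast at hkm; omega))
      rw [show k - 1 - 1 = k - 2 by ring, sub_add_cancel] at this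
      linarith [mul_nonneg (pow_pos hq 2).le h₁, mul_pos (pow_pos hr₀ 2) this,
        mul_nonneg (mul_nonneg hr₀.le hq.le) h₃]

end IsStrictLogConcaveSeq

section PoissonBinomial

variable {ι : Type*} [DecidableEq ι]

noncomputable def poissonBinomial (s : Finset ι) (p : ι → ℝ) (k : ℤ) : ℝ :=
  ∑ A ∈ s.powerset.filter (fun A => (A.card : ℤ) = k),
    (∏ i ∈ A, p i) * ∏ j ∈ s \ A, (1 - p j)

lemma poissonBinomial_empty (p : ι → ℝ) (k : ℤ) :
    poissonBinomial (∅ : Finset ι) p k = if k = 0 then 1 else 0 := by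
  simp [poissonBinomial, sum_filter, eq_comm]

lemma poissonBinomial_insert {a : ι} {s : Finset ι} (ha : a ∉ s) (p : ι → ℝ) (k : ℤ) :
    poissonBinomial (insert a s) p k =
      (1 - p a) * poissonBinomial s p k + p a * poissonBinomial s p (k - 1) := by
  simp only [poissonBinomial, sum_filter, sum_powerset_insert ha, mul_sum]
  congr 1 <;> refine sum_congr rfl fun A hA => ?_ <;>
    have haA : a ∉ A := fun h => ha (mem_powerset.1 hA h)
  · rw [insert_sdiff_of_notMem s haA, prod_insert (by simp [ha])]
    split_ifs <;> ring
  · rw [insert_sdiff_insert, sdiff_insert_of_notMem ha, prod_insert haA, card_insert_of_notMem haA,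
      Nat.cast_succ]
    simp only [← eq_sub_iff_add_eq]
    split_ifs <;> ring

theorem isStrictLogConcaveSeq_poissonBinomial (s : Finset ι) (p : ι → ℝ)
    (hp : ∀ i ∈ s, 0 < p i ∧ p i < 1) :
    IsStrictLogConcaveSeq (poissonBinomial s p) s.card := by
  induction s using Finset.induction_on with
  | empty =>
    simp only [funext (poissonBinomial_empty p), card_empty]
    refine ⟨fun k _ _ => ?_, fun k hk => if_neg (by omega), fun k hk => if_neg (by omega),
      fun k _ _ => ?_⟩ <;> obtain rfl : k = 0 := by omega
    all_goals norm_num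
  | insert a s ha ih =>
    rw [card_insert_of_notMem ha]
    exact (ih fun i hi => hp i (mem_insert_of_mem hi)).convolve_bernoulli
      (hp a (mem_insert_self a s)).1 (hp a (mem_insert_self a s)).2 (poissonBinomial_insert ha p)

end PoissonBinomial

lemma pbin_eq_poissonBinomial (n : ℕ) (p : Fin n → ℝ) : pbin n p = poissonBinomial univ p :=
  funext fun _ => sum_congr rfl fun A _ => by rw [compl_eq_univ_sdiff]

theorem pbin_strict_log_concave_general (n : ℕ) (p : Fin n → ℝ)
    (hp : ∀ i, 0 < p i ∧ p i < 1) (k : ℕ) (hk2 : k ≤ n - 1) :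
    pbin n p ((k : ℤ) - 1) * pbin n p ((k : ℤ) + 1) < (pbin n p k) ^ 2 := by
  rw [pbin_eq_poissonBinomial]
  refine (isStrictLogConcaveSeq_poissonBinomial univ p fun i _ => hp i).mul_lt_sq k
    (Nat.cast_nonneg k) ?_
  rw [card_univ, Fintype.card_fin]
  omega

/-- Strict log-concavity of the Poisson–binomial distribution. -/
theorem pbin_strict_log_concave (n : ℕ) (hn : 2 ≤ n) (p : Fin n → ℝ)
    (hp : ∀ i, 0 < p i ∧ p i < 1) (k : ℕ) (hk1 : 1 ≤ k) (hk2 : k ≤ n - 1) :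
    pbin n p ((k : ℤ) - 1) * pbin n p ((k : ℤ) + 1) < (pbin n p k) ^ 2 :=
  pbin_strict_log_concave_general n p hp k hk2
end

section
/- (Log-concavity of the Poisson–binomial distribution, weak form) Let n ≥ 2 and p = (p_1,…,p_n) ∈ [0,1]^n. Then for every integer k, b(k−1,p)·b(k+1,p) ≤ b(k,p)². -/
open Finset

noncomputable def pbS {ι : Type*} [DecidableEq ι] (p : ι → ℝ) (s : Finset ι) (k : ℤ) : ℝ :=
  ∑ A ∈ s.powerset.filter (fun A => (A.card : ℤ) = k),
    (∏ i ∈ A, p i) * ∏ j ∈ s \ A, (1 - p j)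

lemma pbS_empty {ι : Type*} [DecidableEq ι] (p : ι → ℝ) (k : ℤ) :
    pbS p (∅ : Finset ι) k = if k = 0 then 1 else 0 := by
  simp [pbS]
  split_ifs with h
  · subst h; simp [Finset.filter_singleton]
  · rw [Finset.sum_eq_zero]
    intro A hA
    simp at hA
    exact absurd hA.2 (by simp [hA.1]; omega)

lemma pbS_insert {ι : Type*} [DecidableEq ι] (p : ι → ℝ) (s : Finset ι) {a : ι}
    (ha : a ∉ s) (k : ℤ) :
    pbS p (insert a s) k = (1 - p a) * pbS p s k + p a * pbS p s (k - 1) := by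
  classical
  rw [pbS, Finset.sum_filter, Finset.sum_powerset_insert ha]
  rw [pbS, Finset.sum_filter, pbS, Finset.sum_filter, Finset.mul_sum, Finset.mul_sum]
  congr 1
  · apply Finset.sum_congr rfl
    intro t ht
    rw [Finset.mem_powerset] at ht
    have hat : a ∉ t := fun h => ha (ht h)
    have : insert a s \ t = insert a (s \ t) := by
      rw [Finset.insert_sdiff_of_notMem _ hat]
    rw [this, Finset.prod_insert (by simp [ha])]
    split_ifs <;> ring
  · apply Finset.sum_congr rfl
    intro t ht
    rw [Finset.mem_powerset] at ht
    have hat : a ∉ t := fun h => ha (ht h)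
    have h1 : insert a s \ insert a t = s \ t := by
      ext x
      simp only [Finset.mem_sdiff, Finset.mem_insert]
      constructor
      · rintro ⟨hx1 | hx1, hx2⟩
        · exact absurd (Or.inl hx1) hx2
        · exact ⟨hx1, fun h => hx2 (Or.inr h)⟩
      · rintro ⟨hx1, hx2⟩
        exact ⟨Or.inr hx1, fun h => h.elim (fun he => ha (he ▸ hx1)) hx2⟩
    have h2 : ((insert a t).card : ℤ) = t.card + 1 := by
      rw [Finset.card_insert_of_notMem hat]; push_cast; ring
    rw [h1, Finset.prod_insert hat, h2]
    have : ((t.card : ℤ) + 1 = k) ↔ ((t.card : ℤ) = k - 1) := by omega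
    simp only [this]
    split_ifs <;> ring

lemma pbS_tp2 {ι : Type*} [DecidableEq ι] (p : ι → ℝ)
    (hp : ∀ i, 0 ≤ p i ∧ p i ≤ 1) (s : Finset ι) :
    (∀ k, 0 ≤ pbS p s k) ∧
    (∀ j k : ℤ, j ≤ k → pbS p s (j - 1) * pbS p s (k + 1) ≤ pbS p s j * pbS p s k) := by
  classical
  induction s using Finset.induction with
  | empty =>
    constructor
    · intro k; rw [pbS_empty]; split_ifs <;> norm_num
    · intro j k hjk
      rw [pbS_empty, pbS_empty, pbS_empty, pbS_empty]
      by_cases h1 : j - 1 = 0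
      · have : ¬ (k + 1 = 0) := by omega
        simp [h1, this]
        split_ifs <;> norm_num
      · simp [h1]
        split_ifs <;> norm_num
  | @insert a s ha ih =>
    obtain ⟨hnn, htp⟩ := ih
    have ht0 := (hp a).1
    have ht1 := (hp a).2
    have hnn' : ∀ k, 0 ≤ pbS p (insert a s) k := by
      intro k
      rw [pbS_insert p s ha]
      have := hnn k; have := hnn (k - 1)
      nlinarith
    refine ⟨hnn', ?_⟩
    intro j k hjk
    rw [pbS_insert p s ha, pbS_insert p s ha, pbS_insert p s ha, pbS_insert p s ha]
    set t := p a
    have h1 : pbS p s (j - 1) * pbS p s (k + 1) ≤ pbS p s j * pbS p s k := htp j k hjk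
    have h2 : pbS p s (j - 1 - 1) * pbS p s (k - 1 + 1) ≤ pbS p s (j - 1) * pbS p s (k - 1) :=
      htp (j - 1) (k - 1) (by omega)
    have h2' : pbS p s (j - 2) * pbS p s k ≤ pbS p s (j - 1) * pbS p s (k - 1) := by
      have e1 : j - 1 - 1 = j - 2 := by ring
      have e2 : k - 1 + 1 = k := by ring
      rwa [e1, e2] at h2
    have h3 : pbS p s (j - 2) * pbS p s (k + 1) ≤ pbS p s j * pbS p s (k - 1) := by
      have ha1 : pbS p s (j - 1 - 1) * pbS p s (k + 1) ≤ pbS p s (j - 1) * pbS p s k :=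
        htp (j - 1) k (by omega)
      have e1 : j - 1 - 1 = j - 2 := by ring
      rw [e1] at ha1
      rcases eq_or_lt_of_le hjk with heq | hlt
      · subst heq
        calc pbS p s (j - 2) * pbS p s (j + 1) ≤ pbS p s (j - 1) * pbS p s j := ha1
          _ = pbS p s j * pbS p s (j - 1) := by ring
      · have hb : pbS p s (j - 1) * pbS p s (k - 1 + 1) ≤ pbS p s j * pbS p s (k - 1) :=
          htp j (k - 1) (by omega)
        have e2 : k - 1 + 1 = k := by ring
        rw [e2] at hb
        linarith
    have n1 := hnn (j - 2); have n2 := hnn (j - 1); have n3 := hnn j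
    have n4 := hnn (k - 1); have n5 := hnn k; have n6 := hnn (k + 1)
    simp only [show j - 1 - 1 = j - 2 from by ring, show k + 1 - 1 = k from by ring]
    nlinarith [mul_nonneg (mul_nonneg ht0 ht0) (sub_nonneg.2 h2'),
      mul_nonneg (mul_nonneg (sub_nonneg.2 ht1) (sub_nonneg.2 ht1)) (sub_nonneg.2 h1),
      mul_nonneg (mul_nonneg ht0 (sub_nonneg.2 ht1)) (sub_nonneg.2 h3)]


lemma pbin_eq_pbS (n : ℕ) (p : Fin n → ℝ) (k : ℤ) :
    pbin n p k = pbS p Finset.univ k := by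
  unfold pbin pbS
  apply Finset.sum_congr rfl
  intro A _
  rw [Finset.compl_eq_univ_sdiff]


/-- Log-concavity of the Poisson–binomial distribution, weak form. -/
theorem pbin_log_concave (n : ℕ) (hn : 2 ≤ n) (p : Fin n → ℝ)
    (hp : ∀ i, p i ∈ Set.Icc (0 : ℝ) 1) (k : ℤ) :
    pbin n p (k - 1) * pbin n p (k + 1) ≤ (pbin n p k) ^ 2 := by
  rw [pbin_eq_pbS, pbin_eq_pbS, pbin_eq_pbS, sq]
  exact (pbS_tp2 p (fun i => ⟨(hp i).1, (hp i).2⟩) Finset.univ).2 k k le_rfl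
end

section
/- (Combinatorial expansion of b(k−1,p)·b(k+1,p)) Let n ≥ 2, p = (p_1,…,p_n) ∈ ℝ^n, and 1 ≤ k ≤ n−1. Then b(k−1,p)·b(k+1,p) = ∑_{w=0}^{k−1} ∑_{I ⊆ [n], |I| = w} ∑_{J ⊆ [n]∖I, |J| = 2k−2w} C(2k−2w, k−w−1) · ∏_{i∈I} p_i² · ∏_{i'∈J} p_{i'}·(1−p_{i'}) · ∏_{j ∈ (I∪J)^c} (1−p_j)², where (I∪J)^c is the complement of I∪J in [n]. (This identity is obtained by classifying pairs (A,B) with |A| = k−1, |B| = k+1 according to I = A∩B and J = (A∪B)∖(A∩B).) -/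
open Finset

lemma term_split {n : ℕ} (p : Fin n → ℝ) (A B : Finset (Fin n)) :
    ((∏ i ∈ A, p i) * ∏ j ∈ Aᶜ, (1 - p j)) * ((∏ i ∈ B, p i) * ∏ j ∈ Bᶜ, (1 - p j)) =
      (∏ i ∈ A ∩ B, (p i) ^ 2) * (∏ i ∈ (A ∪ B) \ (A ∩ B), p i * (1 - p i)) *
        ∏ j ∈ (A ∪ B)ᶜ, (1 - p j) ^ 2 := by
  have hA : A ∩ B ∪ A \ B = A := by ext x; simp; tauto
  have hB : A ∩ B ∪ B \ A = B := by ext x; simp; tauto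
  have hAc : (A ∪ B)ᶜ ∪ B \ A = Aᶜ := by ext x; simp; tauto
  have hBc : (A ∪ B)ᶜ ∪ A \ B = Bᶜ := by ext x; simp; tauto
  have hJ : (A ∪ B) \ (A ∩ B) = A \ B ∪ B \ A := by ext x; simp; tauto
  have d1 : Disjoint (A ∩ B) (A \ B) := by
    rw [Finset.disjoint_left]; intro x hx hx'; simp at hx hx'; tauto
  have d2 : Disjoint (A ∩ B) (B \ A) := by
    rw [Finset.disjoint_left]; intro x hx hx'; simp at hx hx'; tauto
  have d3 : Disjoint ((A ∪ B)ᶜ) (B \ A) := by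
    rw [Finset.disjoint_left]; intro x hx hx'; simp at hx hx'; tauto
  have d4 : Disjoint ((A ∪ B)ᶜ) (A \ B) := by
    rw [Finset.disjoint_left]; intro x hx hx'; simp at hx hx'; tauto
  have d5 : Disjoint (A \ B) (B \ A) := by
    rw [Finset.disjoint_left]; intro x hx hx'; simp at hx hx'; tauto
  have pA : (∏ i ∈ A, p i) = (∏ i ∈ A ∩ B, p i) * ∏ i ∈ A \ B, p i := by
    rw [← Finset.prod_union d1, hA]
  have pB : (∏ i ∈ B, p i) = (∏ i ∈ A ∩ B, p i) * ∏ i ∈ B \ A, p i := by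
    rw [← Finset.prod_union d2, hB]
  have qA : (∏ j ∈ Aᶜ, (1 - p j)) = (∏ j ∈ (A ∪ B)ᶜ, (1 - p j)) * ∏ j ∈ B \ A, (1 - p j) := by
    rw [← Finset.prod_union d3, hAc]
  have qB : (∏ j ∈ Bᶜ, (1 - p j)) = (∏ j ∈ (A ∪ B)ᶜ, (1 - p j)) * ∏ j ∈ A \ B, (1 - p j) := by
    rw [← Finset.prod_union d4, hBc]
  rw [pA, pB, qA, qB, hJ, Finset.prod_union d5]
  simp only [sq, Finset.prod_mul_distrib]
  ring

set_option maxHeartbeats 1000000 in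
/-- Combinatorial expansion of `b(k−1,p)·b(k+1,p)`, obtained by classifying
pairs `(A,B)` with `|A| = k−1`, `|B| = k+1` according to `I = A∩B` and
`J = (A∪B) \ (A∩B)`. -/
theorem pbin_mul_expansion (n : ℕ) (hn : 2 ≤ n) (p : Fin n → ℝ) (k : ℕ)
    (hk1 : 1 ≤ k) (hk2 : k ≤ n - 1) :
    pbin n p ((k : ℤ) - 1) * pbin n p ((k : ℤ) + 1) =
      ∑ w ∈ Finset.range k,
        ∑ I ∈ Finset.univ.powerset.filter (fun I : Finset (Fin n) => I.card = w),
          ∑ J ∈ (Iᶜ).powerset.filter (fun J : Finset (Fin n) => J.card = 2 * k - 2 * w),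
            ((2 * k - 2 * w).choose (k - w - 1) : ℝ) *
              ((∏ i ∈ I, (p i) ^ 2) * (∏ i' ∈ J, p i' * (1 - p i')) *
                ∏ j ∈ (I ∪ J)ᶜ, (1 - p j) ^ 2) := by
  obtain ⟨m, rfl⟩ : ∃ m, k = m + 1 := ⟨k - 1, by omega⟩
  have hRHS :
      (∑ w ∈ Finset.range (m + 1),
        ∑ I ∈ Finset.univ.powerset.filter (fun I : Finset (Fin n) => I.card = w),
          ∑ J ∈ (Iᶜ).powerset.filter (fun J : Finset (Fin n) => J.card = 2 * (m + 1) - 2 * w),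
            ((2 * (m + 1) - 2 * w).choose ((m + 1) - w - 1) : ℝ) *
              ((∏ i ∈ I, (p i) ^ 2) * (∏ i' ∈ J, p i' * (1 - p i')) *
                ∏ j ∈ (I ∪ J)ᶜ, (1 - p j) ^ 2)) =
      ∑ w ∈ Finset.range (m + 1),
        ∑ I ∈ Finset.univ.powerset.filter (fun I : Finset (Fin n) => I.card = w),
          ∑ J ∈ (Iᶜ).powerset.filter (fun J : Finset (Fin n) => J.card = 2 * (m + 1) - 2 * w),
            ∑ _S ∈ Finset.powersetCard (m - w) J,
              ((∏ i ∈ I, (p i) ^ 2) * (∏ i' ∈ J, p i' * (1 - p i')) *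
                ∏ j ∈ (I ∪ J)ᶜ, (1 - p j) ^ 2) := by
    refine Finset.sum_congr rfl fun w hw => Finset.sum_congr rfl fun I hI =>
      Finset.sum_congr rfl fun J hJm => ?_
    have hw' : w < m + 1 := Finset.mem_range.1 hw
    have hJc : J.card = 2 * (m + 1) - 2 * w := (Finset.mem_filter.1 hJm).2
    rw [Finset.sum_const, Finset.card_powersetCard, hJc, nsmul_eq_mul]
    have : (m + 1) - w - 1 = m - w := by omega
    rw [this]
  rw [hRHS, pbin, pbin, Finset.sum_mul_sum]
  clear hRHS
  simp only [Finset.sum_sigma']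
  refine Finset.sum_nbij'
    (fun x => ⟨(x.1 ∩ x.2).card, x.1 ∩ x.2, (x.1 ∪ x.2) \ (x.1 ∩ x.2), x.1 \ x.2⟩)
    (fun y => ⟨y.2.1 ∪ y.2.2.2, y.2.1 ∪ (y.2.2.1 \ y.2.2.2)⟩) ?_ ?_ ?_ ?_ ?_
  · rintro ⟨A, B⟩ hx
    dsimp only at hx ⊢
    obtain ⟨hxA, hxB⟩ := Finset.mem_sigma.1 hx
    dsimp only at hxA hxB
    have hA : A.card = m := by
      have := (Finset.mem_filter.1 hxA).2; omega
    have hB : B.card = m + 2 := by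
      have := (Finset.mem_filter.1 hxB).2; omega
    have h1 : (A ∪ B).card + (A ∩ B).card = A.card + B.card :=
      Finset.card_union_add_card_inter A B
    have h2 : (A ∩ B).card + (A \ B).card = A.card := Finset.card_inter_add_card_sdiff A B
    have h3 : ((A ∪ B) \ (A ∩ B)).card = (A ∪ B).card - (A ∩ B).card :=
      Finset.card_sdiff_of_subset (Finset.inter_subset_union)
    have hAB : (A ∩ B).card ≤ A.card := Finset.card_le_card Finset.inter_subset_left
    refine Finset.mem_sigma.2 ⟨Finset.mem_range.2 (by dsimp only; omega), Finset.mem_sigma.2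
      ⟨Finset.mem_filter.2 ⟨Finset.mem_powerset.2 (Finset.subset_univ _), rfl⟩,
       Finset.mem_sigma.2 ⟨Finset.mem_filter.2 ⟨Finset.mem_powerset.2 ?_, by dsimp only; omega⟩,
         Finset.mem_powersetCard.2 ⟨?_, by dsimp only; omega⟩⟩⟩⟩
    · dsimp only
      intro x hx'
      simp only [Finset.mem_sdiff, Finset.mem_compl, Finset.mem_inter] at hx' ⊢
      tauto
    · dsimp only
      intro x hx'
      simp only [Finset.mem_sdiff, Finset.mem_inter, Finset.mem_union] at hx' ⊢
      tauto
  · rintro ⟨w, I, J, S⟩ hy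
    dsimp only at hy ⊢
    obtain ⟨hy1, hy2⟩ := Finset.mem_sigma.1 hy
    dsimp only at hy1 hy2
    obtain ⟨hy2a, hy3⟩ := Finset.mem_sigma.1 hy2
    dsimp only at hy2a hy3
    obtain ⟨hy3a, hy4⟩ := Finset.mem_sigma.1 hy3
    dsimp only at hy3a hy4
    have hw : w < m + 1 := Finset.mem_range.1 hy1
    have hI : I.card = w := (Finset.mem_filter.1 hy2a).2
    have hJI : J ⊆ Iᶜ := Finset.mem_powerset.1 (Finset.mem_filter.1 hy3a).1
    have hJc : J.card = 2 * (m + 1) - 2 * w := (Finset.mem_filter.1 hy3a).2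
    obtain ⟨hSJ, hSc⟩ := Finset.mem_powersetCard.1 hy4
    have hSI : Disjoint I S := by
      rw [Finset.disjoint_left]
      intro x hxI hxS
      have := hJI (hSJ hxS)
      simp only [Finset.mem_compl] at this
      exact this hxI
    have hJSI : Disjoint I (J \ S) := by
      rw [Finset.disjoint_left]
      intro x hxI hxJ
      have := hJI (Finset.mem_sdiff.1 hxJ).1
      simp only [Finset.mem_compl] at this
      exact this hxI
    have hSJc : S.card ≤ J.card := Finset.card_le_card hSJ
    refine Finset.mem_sigma.2 ⟨Finset.mem_filter.2
      ⟨Finset.mem_powerset.2 (Finset.subset_univ _), ?_⟩,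
      Finset.mem_filter.2 ⟨Finset.mem_powerset.2 (Finset.subset_univ _), ?_⟩⟩
    · dsimp only
      rw [Finset.card_union_of_disjoint hSI, hI, hSc]
      push_cast
      omega
    · dsimp only
      rw [Finset.card_union_of_disjoint hJSI, hI, Finset.card_sdiff_of_subset hSJ, hSc, hJc]
      push_cast
      omega
  · rintro ⟨A, B⟩ hx
    have e1 : A ∩ B ∪ A \ B = A := by ext x; simp; tauto
    have e2 : A ∩ B ∪ ((A ∪ B) \ (A ∩ B)) \ (A \ B) = B := by ext x; simp; tauto
    show (⟨A ∩ B ∪ A \ B, A ∩ B ∪ ((A ∪ B) \ (A ∩ B)) \ (A \ B)⟩ :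
        Σ _ : Finset (Fin n), Finset (Fin n)) = ⟨A, B⟩
    rw [e1, e2]
  · rintro ⟨w, I, J, S⟩ hy
    obtain ⟨hy1, hy2⟩ := Finset.mem_sigma.1 hy
    dsimp only at hy1 hy2
    obtain ⟨hy2a, hy3⟩ := Finset.mem_sigma.1 hy2
    dsimp only at hy2a hy3
    obtain ⟨hy3a, hy4⟩ := Finset.mem_sigma.1 hy3
    dsimp only at hy3a hy4
    have hI : I.card = w := (Finset.mem_filter.1 hy2a).2
    have hJI : J ⊆ Iᶜ := Finset.mem_powerset.1 (Finset.mem_filter.1 hy3a).1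
    obtain ⟨hSJ, hSc⟩ := Finset.mem_powersetCard.1 hy4
    have hSJ' : ∀ x, x ∈ S → x ∈ J := fun x hx => hSJ hx
    have hJI' : ∀ x, x ∈ J → x ∉ I := by
      intro x hx
      have := hJI hx
      simpa using this
    clear hy hy1 hy2 hy3 hy2a hy3a hy4 hSJ hJI
    have hInt : (I ∪ S) ∩ (I ∪ J \ S) = I := by
      ext x
      simp only [Finset.mem_inter, Finset.mem_union, Finset.mem_sdiff]
      have h1 := hSJ' x
      have h2 := hJI' x
      tauto
    have hUn : ((I ∪ S) ∪ (I ∪ J \ S)) \ I = J := by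
      ext x
      simp only [Finset.mem_sdiff, Finset.mem_union]
      have h1 := hSJ' x
      have h2 := hJI' x
      tauto
    have hSd : (I ∪ S) \ (I ∪ J \ S) = S := by
      ext x
      simp only [Finset.mem_sdiff, Finset.mem_union, not_or, Finset.mem_sdiff]
      have h1 := hSJ' x
      have h2 := hJI' x
      by_cases hxS : x ∈ S <;> by_cases hxJ : x ∈ J <;> by_cases hxI : x ∈ I <;> tauto
    show (⟨((I ∪ S) ∩ (I ∪ J \ S)).card, (I ∪ S) ∩ (I ∪ J \ S),
        ((I ∪ S) ∪ (I ∪ J \ S)) \ ((I ∪ S) ∩ (I ∪ J \ S)), (I ∪ S) \ (I ∪ J \ S)⟩ :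
        Σ _ : ℕ, Σ _ : Finset (Fin n), Σ _ : Finset (Fin n), Finset (Fin n)) = ⟨w, I, J, S⟩
    rw [hInt, hUn, hSd, hI]
  · rintro ⟨A, B⟩ hx
    dsimp only
    have hU : (A ∩ B) ∪ ((A ∪ B) \ (A ∩ B)) = A ∪ B := by
      ext x; simp only [Finset.mem_union, Finset.mem_inter, Finset.mem_sdiff]; tauto
    rw [hU]
    exact term_split p A B
end

section
/- (Combinatorial expansion of the off-diagonal part of b(k,p)²) Let n ≥ 2, p = (p_1,…,p_n) ∈ ℝ^n, and 1 ≤ k ≤ n−1. Then ∑_{C ≠ D ⊆ [n], |C| = |D| = k} ∏_{c∈C} p_c · ∏_{d∈D} p_d · ∏_{c'∈C^c} (1−p_{c'}) · ∏_{d'∈D^c} (1−p_{d'}) = ∑_{w=0}^{k−1} ∑_{I ⊆ [n], |I| = w} ∑_{J ⊆ [n]∖I, |J| = 2k−2w} C(2k−2w, k−w) · ∏_{i∈I} p_i² · ∏_{i'∈J} p_{i'}·(1−p_{i'}) · ∏_{j ∈ (I∪J)^c} (1−p_j)². Consequently, b(k,p)² = ∑_{C ⊆ [n], |C| = k} ∏_{i∈C}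 p_i² ∏_{j∈C^c} (1−p_j)² + the above sum. -/
open Finset

/-!
Expanding `b(k,p)²` gives a sum over ordered pairs `(C, D)` of `k`-sets; the diagonal `C = D`
is the first sum. An off-diagonal pair is recorded by `I = C ∩ D`, `J = C ∆ D` and `S = C \ D`:
checking element by element, the weight of `(C, D)` depends only on `(I, J)`, and
`(C, D) ↦ (I, J, S)` is a bijection onto the triples with `J ⊆ Iᶜ`, `|J| = 2(k - |I|)`, `S ⊆ J`,
`|S| = k - |I|`. Counting the choices of `S` gives the factor `C(2k - 2w, k - w)`, `w = |I|`.
-/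

open scoped symmDiff

theorem sq_sum_eq_sum_sq_add_sum_sum_ne {ι R : Type*} [DecidableEq ι] [Semiring R]
    (s : Finset ι) (f : ι → R) :
    (∑ i ∈ s, f i) ^ 2 = ∑ i ∈ s, f i ^ 2 + ∑ i ∈ s, ∑ j ∈ s with j ≠ i, f i * f j := by
  rw [sq, sum_mul_sum, ← sum_add_distrib]
  refine sum_congr rfl fun i hi => ?_
  rw [← add_sum_erase s _ hi, sq, filter_ne']

section PairsOfFinsets

variable {α : Type*}

theorem prod_mul_prod_mul_prod_compl_mul_prod_compl [Fintype α] [DecidableEq α] {R : Type*}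
    [CommMonoid R] (f g : α → R) (C D : Finset α) :
    (∏ c ∈ C, f c) * (∏ d ∈ D, f d) * (∏ c ∈ Cᶜ, g c) * ∏ d ∈ Dᶜ, g d =
      (∏ i ∈ C ∩ D, f i ^ 2) * (∏ i ∈ C ∆ D, f i * g i) *
        ∏ j ∈ (C ∩ D ∪ C ∆ D)ᶜ, g j ^ 2 := by
  rw [← Fintype.prod_ite_mem C, ← Fintype.prod_ite_mem D, ← Fintype.prod_ite_mem Cᶜ,
    ← Fintype.prod_ite_mem Dᶜ, ← Fintype.prod_ite_mem (C ∩ D), ← Fintype.prod_ite_mem (C ∆ D),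
    ← Fintype.prod_ite_mem (C ∩ D ∪ C ∆ D)ᶜ]
  simp only [← prod_mul_distrib]
  refine prod_congr rfl fun x _ => ?_
  by_cases hC : x ∈ C <;> by_cases hD : x ∈ D <;> simp [hC, hD, mem_symmDiff, sq, mul_comm]

theorem sum_range_sum_card_eq [Fintype α] {M : Type*} [AddCommMonoid M] (k : ℕ)
    (h : ℕ → Finset α → M) :
    ∑ w ∈ range k, ∑ I with #I = w, h w I = ∑ I with #I < k, h #I I := by
  rw [sum_comm' (t' := {I | #I < k}) (s' := fun I => {#I})]
  · simp only [sum_singleton]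
  · intro w I
    simp only [mem_range, mem_filter, mem_univ, true_and, mem_singleton]
    grind

theorem card_symmDiff_of_card_eq [DecidableEq α] {C D : Finset α} {k : ℕ} (hC : #C = k)
    (hD : #D = k) : #(C ∆ D) = 2 * k - 2 * #(C ∩ D) := by
  have hCD : #(C \ D) + #(C ∩ D) = k := hC ▸ card_sdiff_add_card_inter C D
  have hDC : #(D \ C) + #(C ∩ D) = k := inter_comm C D ▸ hD ▸ card_sdiff_add_card_inter D C
  rw [symmDiff_def, sup_eq_union, card_union_of_disjoint disjoint_sdiff_sdiff]
  omega

theorem card_inter_lt_of_card_eq_of_ne [DecidableEq α] {C D : Finset α} {k : ℕ} (hC : #C = k)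
    (hD : #D = k) (hne : C ≠ D) : #(C ∩ D) < k := by
  by_contra! hle
  have hCD : C ∩ D = C := eq_of_subset_of_card_le inter_subset_left (by omega)
  have hDC : C ∩ D = D := eq_of_subset_of_card_le inter_subset_right (by omega)
  exact hne (hCD.symm.trans hDC)

theorem sum_pairs_ne_eq_sum_choose_smul [Fintype α] [DecidableEq α] {M : Type*} [AddCommMonoid M]
    (k : ℕ) (g : Finset α → Finset α → M) :
    ∑ C with #C = k, ∑ D with #D = k ∧ D ≠ C, g (C ∩ D) (C ∆ D) =
      ∑ w ∈ range k, ∑ I with #I = w, ∑ J ∈ Iᶜ.powerset with #J = 2 * k - 2 * w,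
        (2 * k - 2 * w).choose (k - w) • g I J := by
  have expand_choose : ∀ w (I : Finset α),
      ∑ J ∈ Iᶜ.powerset with #J = 2 * k - 2 * w, (2 * k - 2 * w).choose (k - w) • g I J =
        ∑ J ∈ Iᶜ.powerset with #J = 2 * k - 2 * w, ∑ _S ∈ powersetCard (k - w) J, g I J := by
    intro w I
    refine sum_congr rfl fun J hJ => ?_
    rw [sum_const, card_powersetCard, (mem_filter.1 hJ).2]
  rw [sum_congr rfl fun w _ => sum_congr rfl fun I _ => expand_choose w I, sum_range_sum_card_eq]
  simp only [sum_sigma']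
  refine sum_nbij' (fun q => ⟨q.1 ∩ q.2, q.1 ∆ q.2, q.1 \ q.2⟩)
    (fun t => ⟨t.1 ∪ t.2.2, t.1 ∪ (t.2.1 \ t.2.2)⟩) ?_ ?_ ?_ ?_ (fun _ _ => rfl)
  · rintro ⟨C, D⟩ hCD
    simp only [mem_sigma, mem_filter, mem_univ, true_and, mem_powerset, mem_powersetCard] at hCD ⊢
    obtain ⟨hC, hD, hne⟩ := hCD
    refine ⟨card_inter_lt_of_card_eq_of_ne hC hD hne.symm,
      ⟨subset_compl_iff_disjoint_right.2 (disjoint_symmDiff_inf C D),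
        card_symmDiff_of_card_eq hC hD⟩, symmDiff_subset_sdiff, ?_⟩
    rw [card_sdiff, inter_comm, hC]
  · rintro ⟨I, J, S⟩ hIJS
    simp only [mem_sigma, mem_filter, mem_univ, true_and, mem_powerset, mem_powersetCard] at hIJS ⊢
    obtain ⟨hI, ⟨hJI, hJ⟩, hSJ, hS⟩ := hIJS
    have hIJ : Disjoint I J := subset_compl_iff_disjoint_left.1 hJI
    rw [card_union_of_disjoint (hIJ.mono_right hSJ),
      card_union_of_disjoint (hIJ.mono_right sdiff_subset), card_sdiff_of_subset hSJ]
    refine ⟨by omega, by omega, fun hDC => ?_⟩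
    obtain ⟨x, hx⟩ := card_pos.1 (show 0 < #S by omega)
    have : x ∈ I ∪ (J \ S) := hDC ▸ mem_union_right I hx
    grind [disjoint_left]
  · rintro ⟨C, D⟩ -
    simp only [Sigma.mk.injEq, heq_eq_eq]
    constructor <;> ext x <;> grind [mem_symmDiff]
  · rintro ⟨I, J, S⟩ hIJS
    simp only [mem_sigma, mem_filter, mem_univ, true_and, mem_powerset, mem_powersetCard] at hIJS
    obtain ⟨-, ⟨hJI, -⟩, hSJ, -⟩ := hIJS
    simp only [Sigma.mk.injEq, heq_eq_eq]
    refine ⟨?_, ?_, ?_⟩ <;> ext x <;> grind [mem_compl, mem_symmDiff]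

end PairsOfFinsets

theorem pbin_sq_expansion_general (n : ℕ) (p : Fin n → ℝ) (k : ℕ) :
    (∑ C ∈ Finset.univ.powerset.filter (fun C : Finset (Fin n) => C.card = k),
        ∑ D ∈ Finset.univ.powerset.filter
            (fun D : Finset (Fin n) => D.card = k ∧ D ≠ C),
          (∏ c ∈ C, p c) * (∏ d ∈ D, p d) * (∏ c' ∈ Cᶜ, (1 - p c')) *
            ∏ d' ∈ Dᶜ, (1 - p d')) =
      (∑ w ∈ Finset.range k,
        ∑ I ∈ Finset.univ.powerset.filter (fun I : Finset (Fin n) => I.card = w),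
          ∑ J ∈ (Iᶜ).powerset.filter (fun J : Finset (Fin n) => J.card = 2 * k - 2 * w),
            ((2 * k - 2 * w).choose (k - w) : ℝ) *
              ((∏ i ∈ I, (p i) ^ 2) * (∏ i' ∈ J, p i' * (1 - p i')) *
                ∏ j ∈ (I ∪ J)ᶜ, (1 - p j) ^ 2)) ∧
    (pbin n p k) ^ 2 =
      (∑ C ∈ Finset.univ.powerset.filter (fun C : Finset (Fin n) => C.card = k),
        (∏ i ∈ C, (p i) ^ 2) * ∏ j ∈ Cᶜ, (1 - p j) ^ 2) +
      ∑ C ∈ Finset.univ.powerset.filter (fun C : Finset (Fin n) => C.card = k),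
        ∑ D ∈ Finset.univ.powerset.filter
            (fun D : Finset (Fin n) => D.card = k ∧ D ≠ C),
          (∏ c ∈ C, p c) * (∏ d ∈ D, p d) * (∏ c' ∈ Cᶜ, (1 - p c')) *
            ∏ d' ∈ Dᶜ, (1 - p d') := by
  refine ⟨?_, ?_⟩
  · simp only [powerset_univ, prod_mul_prod_mul_prod_compl_mul_prod_compl p (1 - p ·),
      ← nsmul_eq_mul]
    exact sum_pairs_ne_eq_sum_choose_smul k fun I J =>
      (∏ i ∈ I, p i ^ 2) * (∏ i ∈ J, p i * (1 - p i)) * ∏ j ∈ (I ∪ J)ᶜ, (1 - p j) ^ 2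
  · have hpbin : pbin n p k = ∑ C with #C = k, (∏ i ∈ C, p i) * ∏ j ∈ Cᶜ, (1 - p j) := by
      simp only [pbin, powerset_univ, Nat.cast_inj]
    rw [hpbin, sq_sum_eq_sum_sq_add_sum_sum_ne]
    simp only [powerset_univ, filter_filter, mul_pow, prod_pow]
    congr! 3 with C _ D _
    ring

/-- Combinatorial expansion of the off-diagonal part of `b(k,p)²`, obtained by
classifying pairs `(C,D)` with `C ≠ D`, `|C| = |D| = k` according to `I = C∩D`
and `J = (C∪D) \ (C∩D)`; consequently `b(k,p)²` equals the diagonal part plus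
this sum. -/
theorem pbin_sq_expansion (n : ℕ) (hn : 2 ≤ n) (p : Fin n → ℝ) (k : ℕ)
    (hk1 : 1 ≤ k) (hk2 : k ≤ n - 1) :
    (∑ C ∈ Finset.univ.powerset.filter (fun C : Finset (Fin n) => C.card = k),
        ∑ D ∈ Finset.univ.powerset.filter
            (fun D : Finset (Fin n) => D.card = k ∧ D ≠ C),
          (∏ c ∈ C, p c) * (∏ d ∈ D, p d) * (∏ c' ∈ Cᶜ, (1 - p c')) *
            ∏ d' ∈ Dᶜ, (1 - p d')) =
      (∑ w ∈ Finset.range k,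
        ∑ I ∈ Finset.univ.powerset.filter (fun I : Finset (Fin n) => I.card = w),
          ∑ J ∈ (Iᶜ).powerset.filter (fun J : Finset (Fin n) => J.card = 2 * k - 2 * w),
            ((2 * k - 2 * w).choose (k - w) : ℝ) *
              ((∏ i ∈ I, (p i) ^ 2) * (∏ i' ∈ J, p i' * (1 - p i')) *
                ∏ j ∈ (I ∪ J)ᶜ, (1 - p j) ^ 2)) ∧
    (pbin n p k) ^ 2 =
      (∑ C ∈ Finset.univ.powerset.filter (fun C : Finset (Fin n) => C.card = k),
        (∏ i ∈ C, (p i) ^ 2) * ∏ j ∈ Cᶜ, (1 - p j) ^ 2) +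
      ∑ C ∈ Finset.univ.powerset.filter (fun C : Finset (Fin n) => C.card = k),
        ∑ D ∈ Finset.univ.powerset.filter
            (fun D : Finset (Fin n) => D.card = k ∧ D ≠ C),
          (∏ c ∈ C, p c) * (∏ d ∈ D, p d) * (∏ c' ∈ Cᶜ, (1 - p c')) *
            ∏ d' ∈ Dᶜ, (1 - p d') :=
  pbin_sq_expansion_general n p k
end
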